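/- arXiv:1206.1735 — 2 statements merged into one kernel-verified Lean document; each statement's English description precedes it below -/
import Mathlib

section
/- Let A ⊆ B be positive affine semigroups in ℕ^m with C(A) = C(B). Then the set B_A := {x ∈ B : x ∉ B + (A ∖ {0})} is finite. -/
/-!
Every generator `g` of `B` lies in `C(B) = C(A)`, so clearing denominators in a rational
combination gives a positive multiple `N_g • g ∈ A`. If `x ∈ B` is written as `∑ a_g • g` with
some `a_g ≥ N_g` and `g ≠ 0`, then lowering `a_g` by `N_g` exhibits `x ∈ B + (A ∖ {0})`. Hence every
element of `B_A` is a combination of the generators with coefficients `a_g < N_g`, and there are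
only finitely many of those.
-/

open scoped BigOperators

/-- The coordinatewise cast `ℕ^m → ℤ^m`. -/
def ntz {m : ℕ} (x : Fin m → ℕ) : Fin m → ℤ := fun i => (x i : ℤ)

/-- The coordinatewise cast `ℕ^m → ℚ^m`. -/
def ntq {m : ℕ} (x : Fin m → ℕ) : Fin m → ℚ := fun i => (x i : ℚ)

/-- `G(S)`: the subgroup of `ℤ^m` generated by an affine semigroup `S ⊆ ℕ^m`. -/
def grp {m : ℕ} (S : AddSubmonoid (Fin m → ℕ)) : AddSubgroup (Fin m → ℤ) :=
  AddSubgroup.closure (ntz '' (S : Set (Fin m → ℕ)))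

/-- `C(S)`: the cone in `ℚ^m` generated by `S`, i.e. all nonnegative rational
linear combinations of elements of `S`. -/
def cone {m : ℕ} (S : AddSubmonoid (Fin m → ℕ)) : Set (Fin m → ℚ) :=
  {x | ∃ (n : ℕ) (c : Fin n → ℚ) (v : Fin n → Fin m → ℕ),
    (∀ i, 0 ≤ c i) ∧ (∀ i, v i ∈ S) ∧ x = ∑ i, c i • ntq (v i)}

/-- `B_A := {x ∈ B : x ∉ B + (A \ {0})}`. -/
def BA {m : ℕ} (A B : AddSubmonoid (Fin m → ℕ)) : Set (Fin m → ℕ) :=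
  {x | x ∈ B ∧ ¬ ∃ b ∈ B, ∃ a ∈ A, a ≠ 0 ∧ x = b + a}

open Finset

lemma sum_nsmul_eq_sum_tsub_single_add {ι M : Type*} [AddCommMonoid M] [Fintype ι]
    [DecidableEq ι] (v : ι → M) {a : ι → ℕ} {i : ι} {n : ℕ} (h : n ≤ a i) :
    ∑ j, a j • v j = ∑ j, (a - Pi.single i n : ι → ℕ) j • v j + n • v i := by
  have hle : Pi.single i n ≤ a := fun j => by
    by_cases hj : j = i
    · subst hj; simpa using h
    · simp [hj]
  conv_lhs => rw [← tsub_add_cancel_of_le hle]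
  simp [add_smul, sum_add_distrib, Pi.single_apply, ite_smul]

theorem finite_setOf_not_eq_add_of_nsmul_mem {M : Type*} [AddCommMonoid M] [IsAddTorsionFree M]
    {A : Set M} {s : Finset M} (N : M → ℕ) (hpos : ∀ g ∈ s, 0 < N g) (hA : ∀ g ∈ s, N g • g ∈ A) :
    {x | x ∈ AddSubmonoid.closure (s : Set M) ∧
      ¬ ∃ b ∈ AddSubmonoid.closure (s : Set M), ∃ a ∈ A, a ≠ 0 ∧ x = b + a}.Finite := by
  classical
  refine (Set.finite_range fun c : (g : s) → Fin (N g) => ∑ g, (c g : ℕ) • (g : M)).subset ?_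
  rintro x ⟨hx, hirred⟩
  obtain ⟨a, rfl⟩ := AddSubmonoid.mem_closure_finset'.1 hx
  have hlt : ∀ g : s, (g : M) ≠ 0 → a g < N g := by
    intro g hg
    by_contra! hle
    exact hirred ⟨_, AddSubmonoid.mem_closure_finset'.2 ⟨_, rfl⟩, _, hA g g.2,
      (nsmul_eq_zero_iff_right (hpos g g.2).ne').not.2 hg,
      sum_nsmul_eq_sum_tsub_single_add _ hle⟩
  refine ⟨fun g => ⟨if (g : M) = 0 then 0 else a g, ?_⟩, ?_⟩
  · split_ifs with h
    exacts [hpos g g.2, hlt g h]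
  · refine sum_congr rfl fun g _ => ?_
    dsimp only
    split_ifs with h <;> simp [h]

lemma exists_pos_nat_mul_eq_natCast {ι : Type*} [Fintype ι] {c : ι → ℚ} (hc : ∀ i, 0 ≤ c i) :
    ∃ D : ℕ, 0 < D ∧ ∃ e : ι → ℕ, ∀ i, (D : ℚ) * c i = e i := by
  classical
  refine ⟨∏ i, (c i).den, prod_pos fun i _ => (c i).pos,
    fun i => (∏ j ∈ univ.erase i, (c j).den) * (c i).num.toNat, fun i => ?_⟩
  have hnum : (((c i).num.toNat : ℤ) : ℚ) = (c i).num := by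
    rw [Int.toNat_of_nonneg (Rat.num_nonneg.2 (hc i))]
  rw [← mul_prod_erase _ _ (mem_univ i)]
  push_cast at hnum ⊢
  rw [hnum, ← Rat.den_mul_eq_num]
  ring

lemma ntq_injective {m : ℕ} : Function.Injective (@ntq m) :=
  Nat.cast_injective.comp_left

lemma ntq_mem_cone {m : ℕ} (S : AddSubmonoid (Fin m → ℕ)) {g : Fin m → ℕ} (hg : g ∈ S) :
    ntq g ∈ cone S :=
  ⟨1, fun _ => 1, fun _ => g, fun _ => zero_le_one, fun _ => hg, by simp⟩

lemma exists_pos_nsmul_mem_of_ntq_mem_cone {m : ℕ} {S : AddSubmonoid (Fin m → ℕ)}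
    {g : Fin m → ℕ} (hg : ntq g ∈ cone S) : ∃ D : ℕ, 0 < D ∧ D • g ∈ S := by
  obtain ⟨n, c, v, hc, hv, hgc⟩ := hg
  obtain ⟨D, hD, e, he⟩ := exists_pos_nat_mul_eq_natCast hc
  refine ⟨D, hD, ?_⟩
  have hDg : D • g = ∑ i, e i • v i := ntq_injective <| funext fun j => by
    have := congrFun hgc j
    simp only [ntq, Finset.sum_apply, Pi.smul_apply, smul_eq_mul] at this ⊢
    push_cast
    simp only [this, mul_sum, ← mul_assoc, he]
  rw [hDg]
  exact sum_mem fun i _ => nsmul_mem (hv i) _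

theorem stmt5_general {m : ℕ} (A B : AddSubmonoid (Fin m → ℕ)) (hBfg : B.FG)
    (hcone : cone A = cone B) :
    (BA A B).Finite := by
  obtain ⟨s, rfl⟩ := hBfg
  have hmul : ∀ g ∈ s, ∃ N, 0 < N ∧ N • g ∈ A := fun g hg =>
    exists_pos_nsmul_mem_of_ntq_mem_cone (hcone ▸ ntq_mem_cone _ (AddSubmonoid.subset_closure hg))
  choose! N hpos hA using hmul
  exact finite_setOf_not_eq_add_of_nsmul_mem N hpos hA

/-- Let `A ⊆ B` be positive affine semigroups in `ℕ^m` with `C(A) = C(B)`.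
Then the set `B_A := {x ∈ B : x ∉ B + (A \ {0})}` is finite. -/
theorem stmt5 {m : ℕ} (A B : AddSubmonoid (Fin m → ℕ)) (hAfg : A.FG) (hBfg : B.FG)
    (hAB : A ≤ B) (hcone : cone A = cone B) :
    (BA A B).Finite :=
  stmt5_general A B hBfg hcone
end

section
/- Let B ⊆ ℕ^m be a positive affine semigroup such that C(B) is generated by linearly independent elements e_1,…,e_d ∈ B, and let A be the submonoid of B generated by e_1,…,e_d. Assume that for every coset g of G(A) in G(B) there is an h_g ∈ G(B) such that either B ∩ g = h_g + A or B ∩ g = h_g + (A ∖ {0}). Let H := {h ∈ G(B) : B ∩ (h + G(A)) = h + (A ∖ {0})}. If h ∈ H and b is an element of the minimal generating set Hilb(B) of B such that h + b ∉ B, then b ∉ {e_1,…,e_d} and h + b ∈ H, i.e., B ∩ ((h + b) + G(A)) = (h + b) + (A ∖ {0}). -/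
open scoped BigOperators

/-- `Hilb(S)`: the unique minimal generating set of a positive affine semigroup
`S ⊆ ℕ^m`, i.e. the set of nonzero elements of `S` that are not sums of two nonzero
elements of `S`. -/
def Hilb {m : ℕ} (S : AddSubmonoid (Fin m → ℕ)) : Set (Fin m → ℕ) :=
  {x | x ∈ S ∧ x ≠ 0 ∧ ¬ ∃ y ∈ S, ∃ z ∈ S, y ≠ 0 ∧ z ≠ 0 ∧ x = y + z}

/-!
Write `t = h + b`. Since `b ∈ B` and `h + (A ∖ {0}) ⊆ B`, also `t + (A ∖ {0}) ⊆ B`, while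
`t ∉ B`; taking `a = e_k` shows `b ≠ e_k`. In coordinates with respect to the basis `e` of
`G(A)`, the part of `B` in the coset of `t` becomes a set of the form `u + ℕ^d` or
`u + (ℕ^d ∖ {0})` that contains every unit vector but not `0`. Such a set is `ℕ^d ∖ {0}`:
in the first case this forces `d = 1` and `u = 1`, in the second `u = 0`.
-/

open Set

section Coordinates

variable {m d : ℕ} (e : Fin d → Fin m → ℕ)

lemma ntz_add (x y : Fin m → ℕ) : ntz (x + y) = ntz x + ntz y := by
  funext i; simp [ntz]

lemma ntz_eq_zero_iff {x : Fin m → ℕ} : ntz x = 0 ↔ x = 0 := by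
  simp [funext_iff, ntz]

lemma ntz_sum_nsmul (n : Fin d → ℕ) :
    ntz (∑ k, n k • e k) = ∑ k, (n k : ℤ) • ntz (e k) := by
  funext i; simp [ntz, Finset.sum_apply]

lemma ne_zero_of_linearIndependent_ntq (hli : LinearIndependent ℚ fun k => ntq (e k))
    (k : Fin d) : e k ≠ 0 := fun hk =>
  hli.ne_zero k (by funext i; simp [hk, ntq])

/-- Coordinates on `G(A)` with respect to the basis `e`. -/
def intComb : (Fin d → ℤ) →ₗ[ℤ] Fin m → ℤ :=
  Fintype.linearCombination ℤ fun k => ntz (e k)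

lemma intComb_apply (c : Fin d → ℤ) : intComb e c = ∑ k, c k • ntz (e k) :=
  Fintype.linearCombination_apply _ _ _

lemma intComb_single (k : Fin d) : intComb e (Pi.single k 1) = ntz (e k) := by
  simp [intComb]

lemma intComb_injective (hli : LinearIndependent ℚ fun k => ntq (e k)) :
    Function.Injective (intComb e) := by
  refine (injective_iff_map_eq_zero _).mpr fun c hc => funext fun k => ?_
  have hcℚ : ∑ k, (c k : ℚ) • ntq (e k) = 0 := by
    funext i
    simpa [intComb_apply, Finset.sum_apply, ntq, ntz] using
      congr_arg (Int.cast : ℤ → ℚ) (congrFun hc i)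
  exact_mod_cast Fintype.linearIndependent_iff.mp hli _ hcℚ k

lemma mem_grp_closure_range_iff {v : Fin m → ℤ} :
    v ∈ grp (AddSubmonoid.closure (range e)) ↔ ∃ c, intComb e c = v := by
  constructor
  · intro hv
    suffices grp (AddSubmonoid.closure (range e)) ≤ (intComb e).range.toAddSubgroup from this hv
    refine AddSubgroup.closure_le _ |>.mpr ?_
    rintro _ ⟨a, ha, rfl⟩
    obtain ⟨n, rfl⟩ := AddSubmonoid.mem_closure_range_iff_of_fintype.mp ha
    exact LinearMap.mem_range.mpr ⟨fun k => (n k : ℤ), by rw [intComb_apply, ntz_sum_nsmul]⟩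
  · rintro ⟨c, rfl⟩
    rw [intComb_apply]
    exact sum_mem fun k _ => zsmul_mem (AddSubgroup.subset_closure
      (mem_image_of_mem ntz (AddSubmonoid.subset_closure (mem_range_self k)))) _

lemma exists_mem_closure_ntz_eq_iff (hli : LinearIndependent ℚ fun k => ntq (e k))
    (c : Fin d → ℤ) :
    (∃ a ∈ AddSubmonoid.closure (range e), ntz a = intComb e c) ↔ 0 ≤ c := by
  constructor
  · rintro ⟨a, ha, hac⟩
    obtain ⟨n, rfl⟩ := AddSubmonoid.mem_closure_range_iff_of_fintype.mp ha
    have : (fun k => (n k : ℤ)) = c := intComb_injective e hli (by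
      rw [← hac, intComb_apply, ntz_sum_nsmul])
    exact this ▸ fun k => Int.natCast_nonneg _
  · intro hc
    refine ⟨∑ k, (c k).toNat • e k, AddSubmonoid.mem_closure_range_iff_of_fintype.mpr
      ⟨_, rfl⟩, ?_⟩
    rw [ntz_sum_nsmul, intComb_apply]
    congr! with k
    exact Int.toNat_of_nonneg (hc k)

lemma exists_mem_closure_ne_zero_ntz_eq_iff (hli : LinearIndependent ℚ fun k => ntq (e k))
    (c : Fin d → ℤ) :
    (∃ a ∈ AddSubmonoid.closure (range e), a ≠ 0 ∧ ntz a = intComb e c) ↔ 0 < c := by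
  have hne : ∀ a, ntz a = intComb e c → (a ≠ 0 ↔ c ≠ 0) := fun a hac => by
    rw [ne_eq, ← ntz_eq_zero_iff, hac, ← map_zero (intComb e), (intComb_injective e hli).eq_iff]
  rw [lt_iff_le_and_ne, ne_comm, ← exists_mem_closure_ntz_eq_iff e hli]
  constructor
  · rintro ⟨a, ha, ha0, hac⟩
    exact ⟨⟨a, ha, hac⟩, (hne a hac).mp ha0⟩
  · rintro ⟨⟨a, ha, hac⟩, hc0⟩
    exact ⟨a, ha, (hne a hac).mpr hc0, hac⟩

end Coordinates

section Order

variable {ι : Type*} [DecidableEq ι]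

lemma Ici_eq_Ioi_zero_of_le_single {u : ι → ℤ} (hu : ∀ k, u ≤ Pi.single k 1)
    (h0 : ¬ u ≤ 0) : Ici u = Ioi 0 := by
  obtain ⟨j, hj⟩ : ∃ j, 0 < u j := by simpa [Pi.le_def] using h0
  have hunique : ∀ k, k = j := fun k => by
    by_contra hkj
    simpa [Pi.single_apply, Ne.symm hkj] using (hu k j).trans_lt' hj
  have huj : u j = 1 := le_antisymm (by simpa using hu j j) hj
  ext c
  simp only [mem_Ici, mem_Ioi, Pi.lt_def, Pi.le_def, Pi.zero_apply]
  constructor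
  · intro h
    refine ⟨fun i => ?_, j, ?_⟩
    · rw [hunique i]; linarith [h j]
    · linarith [h j]
  · rintro ⟨-, i, hi⟩ k
    rw [hunique k, huj]
    exact hunique i ▸ hi

lemma eq_zero_of_lt_single {u : ι → ℤ} (hu : ∀ k, u < Pi.single k 1) (h0 : ¬ u < 0) :
    u = 0 := by
  have hle : u ≤ 0 := fun j => by
    by_contra! hj
    have huj : u j = 1 := le_antisymm (by simpa using (hu j).le j) hj
    obtain ⟨i, hi⟩ : ∃ i, u i ≠ (Pi.single j 1 : ι → ℤ) i := by
      by_contra! h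
      exact (hu j).ne (funext h)
    have hij : i ≠ j := by rintro rfl; simp [huj] at hi
    simpa [Pi.single_apply, Ne.symm hij] using ((hu i).le j).trans_lt' hj
  exact hle.eq_or_lt.resolve_right h0

lemma eq_Ioi_zero_of_single_mem {P : Set (ι → ℤ)} (hP : ∃ u, P = Ici u ∨ P = Ioi u)
    (hsingle : ∀ k, Pi.single k 1 ∈ P) (h0 : (0 : ι → ℤ) ∉ P) : P = Ioi 0 := by
  obtain ⟨u, rfl | rfl⟩ := hP
  · exact Ici_eq_Ioi_zero_of_le_single hsingle h0
  · rw [eq_zero_of_lt_single hsingle h0]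

end Order

lemma eq_translate_pos_of_translate {m d : ℕ} (e : Fin d → Fin m → ℕ)
    (hli : LinearIndependent ℚ fun k => ntq (e k)) {X : Set (Fin m → ℤ)} {t : Fin m → ℤ}
    (hX : ∀ y ∈ X, y - t ∈ grp (AddSubmonoid.closure (range e)))
    (hpos : ∀ a ∈ AddSubmonoid.closure (range e), a ≠ 0 → t + ntz a ∈ X) (ht : t ∉ X)
    (hdec : ∃ g, X = {y | ∃ a ∈ AddSubmonoid.closure (range e), y = g + ntz a} ∨
      X = {y | ∃ a ∈ AddSubmonoid.closure (range e), a ≠ 0 ∧ y = g + ntz a}) :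
    X = {y | ∃ a ∈ AddSubmonoid.closure (range e), a ≠ 0 ∧ y = t + ntz a} := by
  refine Subset.antisymm (fun y hy => ?_) (by rintro _ ⟨a, ha, ha0, rfl⟩; exact hpos a ha ha0)
  obtain ⟨g, hg⟩ := hdec
  have hgt : g - t ∈ grp (AddSubmonoid.closure (range e)) := by
    obtain ⟨a, ha, rfl⟩ : ∃ a ∈ AddSubmonoid.closure (range e), y = g + ntz a := by
      rcases hg with rfl | rfl
      · exact hy
      · obtain ⟨a, ha, -, rfl⟩ := hy; exact ⟨a, ha, rfl⟩
    have := sub_mem (hX _ hy) (AddSubgroup.subset_closure (mem_image_of_mem ntz ha))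
    rwa [add_sub_right_comm, add_sub_cancel_right] at this
  obtain ⟨u, hu⟩ := (mem_grp_closure_range_iff e).mp hgt
  have hshift : ∀ c x, t + intComb e c = g + x ↔ x = intComb e (c - u) := fun c x => by
    rw [map_sub, hu]
    constructor <;> intro h <;> linear_combination -h
  have hP : ∃ u, {c | t + intComb e c ∈ X} = Ici u ∨ {c | t + intComb e c ∈ X} = Ioi u := by
    refine ⟨u, hg.imp (fun hg => ?_) (fun hg => ?_)⟩ <;> ext c
    · simp only [hg, mem_ofPred_eq, hshift, mem_Ici, ← sub_nonneg (a := c)]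
      exact exists_mem_closure_ntz_eq_iff e hli _
    · simp only [hg, mem_ofPred_eq, hshift, mem_Ioi, ← sub_pos (a := c)]
      exact exists_mem_closure_ne_zero_ntz_eq_iff e hli _
  have hsingle (k : Fin d) : t + intComb e (Pi.single k 1) ∈ X := by
    rw [intComb_single]
    exact hpos _ (AddSubmonoid.subset_closure (mem_range_self k))
      (ne_zero_of_linearIndependent_ntq e hli k)
  have hPpos := eq_Ioi_zero_of_single_mem hP hsingle (by simpa using ht)
  obtain ⟨c, hc⟩ := (mem_grp_closure_range_iff e).mp (hX y hy)
  have hcpos : c ∈ Ioi 0 := hPpos ▸ show t + intComb e c ∈ X by rwa [hc, add_sub_cancel]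
  obtain ⟨a, ha, ha0, hac⟩ := (exists_mem_closure_ne_zero_ntz_eq_iff e hli c).mpr hcpos
  exact ⟨a, ha, ha0, by rw [hac, hc, add_sub_cancel]⟩

theorem stmt12_general {m d : ℕ} (B : AddSubmonoid (Fin m → ℕ))
    (e : Fin d → Fin m → ℕ)
    (hli : LinearIndependent ℚ (fun k => ntq (e k)))
    (A : AddSubmonoid (Fin m → ℕ)) (hA : A = AddSubmonoid.closure (Set.range e))
    (hdec : ∀ x ∈ grp B, ∃ hg ∈ grp B,
      {y : Fin m → ℤ | ∃ b ∈ B, ntz b = y ∧ y - x ∈ grp A} =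
          {y : Fin m → ℤ | ∃ a ∈ A, y = hg + ntz a} ∨
      {y : Fin m → ℤ | ∃ b ∈ B, ntz b = y ∧ y - x ∈ grp A} =
          {y : Fin m → ℤ | ∃ a ∈ A, a ≠ 0 ∧ y = hg + ntz a})
    (H : Set (Fin m → ℤ))
    (hH : H = {h : Fin m → ℤ | h ∈ grp B ∧
      {y : Fin m → ℤ | ∃ b ∈ B, ntz b = y ∧ y - h ∈ grp A} =
        {y : Fin m → ℤ | ∃ a ∈ A, a ≠ 0 ∧ y = h + ntz a}})
    (h : Fin m → ℤ) (hhH : h ∈ H)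
    (b : Fin m → ℕ) (hb : b ∈ Hilb B)
    (hnb : ¬ ∃ c ∈ B, ntz c = h + ntz b) :
    b ∉ Set.range e ∧ h + ntz b ∈ H := by
  subst hA hH
  obtain ⟨hhB, hcoset⟩ := hhH
  have hbB : b ∈ B := hb.1
  have hB : ∀ a ∈ AddSubmonoid.closure (range e), a ≠ 0 → ∃ c ∈ B, ntz c = h + ntz a :=
    fun a ha ha0 => by
      obtain ⟨c, hc, hce, -⟩ := hcoset.symm.subset ⟨a, ha, ha0, rfl⟩
      exact ⟨c, hc, hce⟩
  have htB : h + ntz b ∈ grp B :=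
    add_mem hhB (AddSubgroup.subset_closure (mem_image_of_mem ntz hbB))
  refine ⟨?_, htB, ?_⟩
  · rintro ⟨k, rfl⟩
    exact hnb (hB _ (AddSubmonoid.subset_closure (mem_range_self k))
      (ne_zero_of_linearIndependent_ntq e hli k))
  · obtain ⟨g, -, hg⟩ := hdec _ htB
    refine eq_translate_pos_of_translate e hli (fun _ ⟨_, _, _, hy⟩ => hy) (fun a ha ha0 => ?_)
      (fun ⟨c, hc, hce, _⟩ => hnb ⟨c, hc, hce⟩) ⟨g, hg⟩
    obtain ⟨c, hc, hce⟩ := hB a ha ha0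
    refine ⟨c + b, add_mem hc hbB, by rw [ntz_add, hce, add_right_comm], ?_⟩
    rw [add_sub_cancel_left]
    exact AddSubgroup.subset_closure (mem_image_of_mem ntz ha)

/-- Let `B ⊆ ℕ^m` be a positive affine semigroup such that `C(B)` is
generated by linearly independent `e₁,…,e_d ∈ B`, and let `A` be the submonoid of `B`
generated by the `e_k`.  Assume that for every coset `g` of `G(A)` in `G(B)` there is
`h_g ∈ G(B)` with `B ∩ g = h_g + A` or `B ∩ g = h_g + (A \ {0})`.  Let
`H := {h ∈ G(B) : B ∩ (h + G(A)) = h + (A \ {0})}`.  If `h ∈ H` and `b ∈ Hilb(B)`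
with `h + b ∉ B`, then `b ∉ {e₁,…,e_d}` and `h + b ∈ H`. -/
theorem stmt12 {m d : ℕ} (B : AddSubmonoid (Fin m → ℕ)) (hBfg : B.FG)
    (e : Fin d → Fin m → ℕ) (he : ∀ k, e k ∈ B)
    (hli : LinearIndependent ℚ (fun k => ntq (e k)))
    (A : AddSubmonoid (Fin m → ℕ)) (hA : A = AddSubmonoid.closure (Set.range e))
    (hcone : cone B = cone A)
    (hdec : ∀ x ∈ grp B, ∃ hg ∈ grp B,
      {y : Fin m → ℤ | ∃ b ∈ B, ntz b = y ∧ y - x ∈ grp A} =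
          {y : Fin m → ℤ | ∃ a ∈ A, y = hg + ntz a} ∨
      {y : Fin m → ℤ | ∃ b ∈ B, ntz b = y ∧ y - x ∈ grp A} =
          {y : Fin m → ℤ | ∃ a ∈ A, a ≠ 0 ∧ y = hg + ntz a})
    (H : Set (Fin m → ℤ))
    (hH : H = {h : Fin m → ℤ | h ∈ grp B ∧
      {y : Fin m → ℤ | ∃ b ∈ B, ntz b = y ∧ y - h ∈ grp A} =
        {y : Fin m → ℤ | ∃ a ∈ A, a ≠ 0 ∧ y = h + ntz a}})
    (h : Fin m → ℤ) (hhH : h ∈ H)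
    (b : Fin m → ℕ) (hb : b ∈ Hilb B)
    (hnb : ¬ ∃ c ∈ B, ntz c = h + ntz b) :
    b ∉ Set.range e ∧ h + ntz b ∈ H :=
  stmt12_general B e hli A hA hdec H hH h hhH b hb hnb
end
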